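/- arXiv:1402.5212 — 3 statements merged into one kernel-verified Lean document; each statement's English description precedes it below -/
import Mathlib

section
/- Pairwise intersection lemma: Let (X, B, μ) be a probability space (μ(X) = 1), let 0 < ε ≤ 1/2, and let ⟨A_i : i ∈ ℕ⟩ be a sequence of measurable sets with μ(A_i) ≥ ε for every i. Then there exist indices i < j such that μ(A_i ∩ A_j) ≥ ε³. -/
/-!
If all pairwise intersections among `A 0, …, A (n-1)` had measure below `ε³`, the Bonferroni
inequality would give `1 ≥ μ (⋃ i < n, A i) ≥ n ε - ε³ (n choose 2)`, and the right-hand side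
exceeds `1` for `n = ⌈ε⁻²⌉`.
-/

open MeasureTheory Finset

theorem sum_range_sum_range_le_choose_two_mul {f : ℕ → ℕ → ℝ} {c : ℝ}
    (hf : ∀ i j, i < j → f i j ≤ c) (n : ℕ) :
    ∑ j ∈ range n, ∑ i ∈ range j, f i j ≤ n.choose 2 * c := by
  calc ∑ j ∈ range n, ∑ i ∈ range j, f i j
      ≤ ∑ j ∈ range n, ∑ _i ∈ range j, c :=
        sum_le_sum fun j _ => sum_le_sum fun i hi => hf i j (mem_range.mp hi)
    _ = n.choose 2 * c := by
        simp only [sum_const, card_range, nsmul_eq_mul, ← sum_mul]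
        rw [← Nat.cast_sum, sum_range_id, ← Nat.choose_two_right]

theorem exists_one_add_mul_choose_two_lt {ε : ℝ} (h0 : 0 < ε) (h1 : ε ≤ 1 / 2) :
    ∃ n : ℕ, 1 + ε ^ 3 * n.choose 2 < n * ε := by
  refine ⟨⌈(ε ^ 2)⁻¹⌉₊, ?_⟩
  set n : ℕ := ⌈(ε ^ 2)⁻¹⌉₊
  have hε2 : 0 < ε ^ 2 := by positivity
  have hn_ge : 1 ≤ n * ε ^ 2 := (inv_le_iff_one_le_mul₀ hε2).mp (Nat.le_ceil _)
  have hn_lt : (n - 1) * ε ^ 2 < 1 := by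
    have := Nat.ceil_lt_add_one (inv_nonneg.mpr hε2.le)
    rwa [← lt_inv_mul_iff₀' hε2, mul_one, sub_lt_iff_lt_add]
  rw [Nat.cast_choose_two]
  -- `n ε ≥ ε⁻¹ ≥ 2`, and the pair term is `(n ε) ((n - 1) ε²) / 2 < n ε / 2`.
  nlinarith [mul_lt_mul_of_pos_left hn_lt (by positivity : 0 < (n : ℝ) * ε)]

namespace MeasureTheory

variable {X : Type*} [MeasurableSpace X] {μ : Measure X} [IsFiniteMeasure μ] {A : ℕ → Set X}

theorem sum_measureReal_le_measureReal_biUnion_add (hA : ∀ i, MeasurableSet (A i)) (n : ℕ) :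
    ∑ i ∈ range n, μ.real (A i) ≤
      μ.real (⋃ i ∈ range n, A i) + ∑ j ∈ range n, ∑ i ∈ range j, μ.real (A i ∩ A j) := by
  induction n with
  | zero => simp
  | succ n ih =>
    have hunion : ⋃ i ∈ range (n + 1), A i = (⋃ i ∈ range n, A i) ∪ A n := by
      rw [range_add_one, set_biUnion_insert, Set.union_comm]
    have hinter : (⋃ i ∈ range n, A i) ∩ A n = ⋃ i ∈ range n, A i ∩ A n :=
      Set.iUnion₂_inter _ _
    have hsplit := measureReal_union_add_inter (s := ⋃ i ∈ range n, A i) (hA n)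
      (measure_ne_top μ _) (measure_ne_top μ _)
    have hbound := measureReal_biUnion_finset_le (μ := μ) (range n) fun i => A i ∩ A n
    rw [sum_range_succ, sum_range_succ, hunion]
    rw [hinter] at hsplit
    linarith

end MeasureTheory

theorem pairwise_intersection_lemma {X : Type*} [MeasurableSpace X] (μ : Measure X)
    [IsProbabilityMeasure μ] (ε : ℝ) (h0 : 0 < ε) (h1 : ε ≤ 1 / 2)
    (A : ℕ → Set X) (hA : ∀ i, MeasurableSet (A i))
    (hε : ∀ i, (μ (A i)).toReal ≥ ε) :
    ∃ i j : ℕ, i < j ∧ (μ (A i ∩ A j)).toReal ≥ ε ^ 3 := by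
  by_contra! hsmall
  obtain ⟨n, hn⟩ := exists_one_add_mul_choose_two_lt h0 h1
  have hsum : n * ε ≤ ∑ i ∈ range n, μ.real (A i) := by
    simpa using card_nsmul_le_sum (range n) (fun i => μ.real (A i)) ε fun i _ => hε i
  have hpairs : ∑ j ∈ range n, ∑ i ∈ range j, μ.real (A i ∩ A j) ≤ n.choose 2 * ε ^ 3 :=
    sum_range_sum_range_le_choose_two_mul (fun i j hij => (hsmall i j hij).le) n
  have hunion : μ.real (⋃ i ∈ range n, A i) ≤ 1 := measureReal_le_one
  linarith [sum_measureReal_le_measureReal_biUnion_add (μ := μ) hA n]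
end

section
/- k-fold intersection lemma: Let (X, B, μ) be a probability space, 0 < ε ≤ 1/2, and ⟨A_i : i ∈ ℕ⟩ a sequence of measurable sets with μ(A_i) ≥ ε for all i. Then for every k ≥ 1 there exist indices i₁ < i₂ < ⋯ < i_k such that μ(A_{i₁} ∩ ⋯ ∩ A_{i_k}) ≥ ε^(3^(k−1)). -/
/-!
If `n > 2 / ε²` sets each have measure at least `ε`, then `0 ≤ Var (∑ 𝟙_{Bᵢ})` forces two of them
to meet in measure at least `ε² / 2 ≥ ε³`. Applied to ever later tails of a sequence, this gives
infinitely many pairwise disjoint such pairs of indices. The intersections over these pairs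
again have measure at least `ε³`, and each is indexed by twice as many sets. After `k - 1` rounds,
`2 ^ (k - 1) ≥ k` indices have intersection of measure at least `ε ^ 3 ^ (k - 1)`.
-/

open MeasureTheory ProbabilityTheory Finset Function

section

variable {X ι : Type*} [MeasurableSpace X] {μ : Measure X} [IsProbabilityMeasure μ]

theorem sq_sum_measureReal_le_sum_sum_measureReal_inter {B : ι → Set X} (s : Finset ι)
    (hB : ∀ i ∈ s, MeasurableSet (B i)) :
    (∑ i ∈ s, μ.real (B i)) ^ 2 ≤ ∑ i ∈ s, ∑ j ∈ s, μ.real (B i ∩ B j) := by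
  have hB₂ : ∀ i ∈ s, ∀ j ∈ s, MeasurableSet (B i ∩ B j) :=
    fun i hi j hj => (hB i hi).inter (hB j hj)
  set f : X → ℝ := fun x => ∑ i ∈ s, (B i).indicator 1 x
  have hf_memLp : MemLp f 2 μ :=
    memLp_finsetSum s fun i hi => (memLp_const 1).indicator (hB i hi)
  have hint_f : μ[f] = ∑ i ∈ s, μ.real (B i) := by
    rw [integral_finsetSum s fun i hi => (integrable_const 1).indicator (hB i hi)]
    exact sum_congr rfl fun i hi => integral_indicator_one (hB i hi)
  have hint_sq : μ[f ^ 2] = ∑ i ∈ s, ∑ j ∈ s, μ.real (B i ∩ B j) := by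
    have hsq : f ^ 2 = fun x => ∑ i ∈ s, ∑ j ∈ s, (B i ∩ B j).indicator 1 x := by
      ext x
      simp only [f, Pi.pow_apply, sq, sum_mul_sum, Set.inter_indicator_one, Pi.mul_apply]
    rw [hsq, integral_finsetSum s fun i hi => integrable_finsetSum s fun j hj =>
      (integrable_const 1).indicator (hB₂ i hi j hj)]
    refine sum_congr rfl fun i hi => ?_
    rw [integral_finsetSum s fun j hj => (integrable_const 1).indicator (hB₂ i hi j hj)]
    exact sum_congr rfl fun j hj => integral_indicator_one (hB₂ i hi j hj)
  have hvar := variance_nonneg f μ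
  rw [variance_eq_sub hf_memLp, hint_f, hint_sq] at hvar
  linarith

theorem exists_ne_half_sq_le_measureReal_inter {B : ι → Set X} {ε : ℝ} (s : Finset ι)
    (hB : ∀ i ∈ s, MeasurableSet (B i)) (hε0 : 0 ≤ ε) (hε : ∀ i ∈ s, ε ≤ μ.real (B i))
    (hs : 2 < #s * ε ^ 2) :
    ∃ i ∈ s, ∃ j ∈ s, i ≠ j ∧ ε ^ 2 / 2 ≤ μ.real (B i ∩ B j) := by
  classical
  by_contra! hsmall
  set n : ℝ := (#s : ℝ)
  have hn : 0 < n := by by_contra! h; nlinarith [sq_nonneg ε]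
  have hsum : n * ε ≤ ∑ i ∈ s, μ.real (B i) := by
    simpa using card_nsmul_le_sum s _ ε hε
  have hdiag : ∀ i ∈ s, ∀ j ∈ s,
      μ.real (B i ∩ B j) ≤ (if i = j then 1 else 0) + ε ^ 2 / 2 := by
    intro i hi j hj
    split_ifs with hij
    · linarith [measureReal_le_one (μ := μ) (s := B i ∩ B j), sq_nonneg ε]
    · simpa using (hsmall i hi j hj hij).le
  have hupper : ∑ i ∈ s, ∑ j ∈ s, μ.real (B i ∩ B j) ≤ n * (1 + n * (ε ^ 2 / 2)) :=
    calc ∑ i ∈ s, ∑ j ∈ s, μ.real (B i ∩ B j)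
        ≤ ∑ i ∈ s, ∑ j ∈ s, ((if i = j then 1 else 0) + ε ^ 2 / 2) :=
          sum_le_sum fun i hi => sum_le_sum fun j hj => hdiag i hi j hj
      _ = n * (1 + n * (ε ^ 2 / 2)) := by
          simp only [sum_add_distrib, sum_ite_eq, sum_const, nsmul_eq_mul, sum_ite_mem, inter_self,
            mul_one, n]
          ring
  have := (pow_le_pow_left₀ (by positivity) hsum 2).trans
    ((sq_sum_measureReal_le_sum_sum_measureReal_inter s hB).trans hupper)
  nlinarith

theorem exists_lt_half_sq_le_measureReal_inter {B : ℕ → Set X} {ε : ℝ}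
    (hB : ∀ m, MeasurableSet (B m)) (hε0 : 0 < ε) (hε : ∀ m, ε ≤ μ.real (B m)) (N : ℕ) :
    ∃ i j, N ≤ i ∧ i < j ∧ ε ^ 2 / 2 ≤ μ.real (B i ∩ B j) := by
  have hn : 2 < (⌊2 / ε ^ 2⌋₊ + 1 : ℕ) * ε ^ 2 := by
    have := Nat.lt_floor_add_one (2 / ε ^ 2)
    rw [div_lt_iff₀ (by positivity)] at this
    exact_mod_cast this
  obtain ⟨i, hi, j, hj, hij, hμ⟩ := exists_ne_half_sq_le_measureReal_inter (μ := μ)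
    (Ico N (N + (⌊2 / ε ^ 2⌋₊ + 1))) (fun i _ => hB i) hε0.le (fun i _ => hε i)
    (by rwa [Nat.card_Ico, add_tsub_cancel_left])
  rw [mem_Ico] at hi hj
  rcases hij.lt_or_gt with h | h
  · exact ⟨i, j, hi.1, h, hμ⟩
  · exact ⟨j, i, hj.1, h, by rwa [Set.inter_comm]⟩

theorem exists_increasing_pairs {P : ℕ → ℕ → Prop}
    (h : ∀ N, ∃ i j, N ≤ i ∧ i < j ∧ P i j) :
    ∃ a b : ℕ → ℕ, (∀ m, a m < b m ∧ P (a m) (b m)) ∧ ∀ ⦃m m'⦄, m < m' → b m < a m' := by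
  choose i j hNi hij hP using h
  let n : ℕ → ℕ := fun m => (fun N => j N + 1)^[m] 0
  have hn_succ : ∀ m, n (m + 1) = j (n m) + 1 := fun m => iterate_succ_apply' _ _ _
  have hn_mono : Monotone n := monotone_nat_of_le_succ fun m => by
    linarith [hn_succ m, hNi (n m), hij (n m)]
  refine ⟨i ∘ n, j ∘ n, fun m => ⟨hij _, hP _⟩, fun m m' hm => ?_⟩
  calc j (n m) < n (m + 1) := by rw [hn_succ]; exact Nat.lt_succ_self _
    _ ≤ n m' := hn_mono hm
    _ ≤ i (n m') := hNi _

theorem exists_pairwise_disjoint_card_two_mul {A : ι → Set X} (hA : ∀ i, MeasurableSet (A i))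
    {ε : ℝ} (hε : 0 < ε) {c : ℕ} {T : ℕ → Finset ι} (hT : Pairwise (Disjoint on T))
    (hcard : ∀ m, #(T m) = c) (hμ : ∀ m, ε ≤ μ.real (⋂ i ∈ (T m : Set ι), A i)) :
    ∃ T' : ℕ → Finset ι, Pairwise (Disjoint on T') ∧ (∀ m, #(T' m) = 2 * c) ∧
      ∀ m, ε ^ 2 / 2 ≤ μ.real (⋂ i ∈ (T' m : Set ι), A i) := by
  classical
  obtain ⟨a, b, hab, hba⟩ := exists_increasing_pairs
    (exists_lt_half_sq_le_measureReal_inter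
      (fun m => .biInter (T m).countable_toSet fun i _ => hA i) hε hμ)
  refine ⟨fun m => T (a m) ∪ T (b m), (pairwise_disjoint_on _).2 fun m m' hm => ?_,
    fun m => ?_, fun m => ?_⟩
  · have hab_m := (hab m).1
    have hab_m' := (hab m').1
    have hba_mm' := hba hm
    simp only [disjoint_union_left, disjoint_union_right]
    exact ⟨⟨hT (by omega), hT (by omega)⟩, hT (by omega), hT (by omega)⟩
  · rw [card_union_of_disjoint (hT (hab m).1.ne), hcard, hcard, two_mul]
  · simpa only [coe_union, Set.biInter_union] using (hab m).2

theorem exists_finset_card_two_pow_mul {A : ι → Set X} (hA : ∀ i, MeasurableSet (A i))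
    (s : ℕ) {ε : ℝ} (hε0 : 0 < ε) (hε1 : ε ≤ 1 / 2) {c : ℕ} {T : ℕ → Finset ι}
    (hT : Pairwise (Disjoint on T)) (hcard : ∀ m, #(T m) = c)
    (hμ : ∀ m, ε ≤ μ.real (⋂ i ∈ (T m : Set ι), A i)) :
    ∃ t : Finset ι, #t = 2 ^ s * c ∧ ε ^ 3 ^ s ≤ μ.real (⋂ i ∈ (t : Set ι), A i) := by
  induction s generalizing ε c T with
  | zero => exact ⟨T 0, by simp [hcard], by simpa using hμ 0⟩
  | succ s ih =>
    obtain ⟨T', hT', hcard', hμ'⟩ := exists_pairwise_disjoint_card_two_mul hA hε0 hT hcard hμ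
    have hcube : ε ^ 3 ≤ ε ^ 2 / 2 := by nlinarith [sq_nonneg ε]
    obtain ⟨t, ht, hμt⟩ := ih (pow_pos hε0 3) (by nlinarith [sq_nonneg ε]) hT' hcard'
      fun m => hcube.trans (hμ' m)
    refine ⟨t, by rw [ht, pow_succ]; ring, ?_⟩
    rwa [pow_succ', pow_mul]

end

theorem k_fold_intersection_lemma_general {X : Type*} [MeasurableSpace X] (μ : Measure X)
    [IsProbabilityMeasure μ] (ε : ℝ) (h0 : 0 < ε) (h1 : ε ≤ 1 / 2)
    (A : ℕ → Set X) (hA : ∀ i, MeasurableSet (A i))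
    (hε : ∀ i, (μ (A i)).toReal ≥ ε) (k : ℕ) :
    ∃ s : Finset ℕ, s.card = k ∧
      (μ (⋂ i ∈ (s : Set ℕ), A i)).toReal ≥ ε ^ (3 ^ (k - 1)) := by
  obtain ⟨t, ht, hμt⟩ := exists_finset_card_two_pow_mul (μ := μ) hA (k - 1) h0 h1
    (T := fun m => {m}) (fun m m' h => disjoint_singleton.2 h) (fun _ => card_singleton _)
    (by simpa [Measure.real] using hε)
  obtain ⟨s, hst, hs⟩ := exists_subset_card_eq (show k ≤ #t by
    rw [ht, mul_one]; have := Nat.lt_two_pow_self (n := k - 1); omega)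
  exact ⟨s, hs,
    hμt.trans (measureReal_mono (Set.biInter_subset_biInter_left (coe_subset.2 hst)))⟩

theorem k_fold_intersection_lemma {X : Type*} [MeasurableSpace X] (μ : Measure X)
    [IsProbabilityMeasure μ] (ε : ℝ) (h0 : 0 < ε) (h1 : ε ≤ 1 / 2)
    (A : ℕ → Set X) (hA : ∀ i, MeasurableSet (A i))
    (hε : ∀ i, (μ (A i)).toReal ≥ ε) (k : ℕ) (hk : 1 ≤ k) :
    ∃ s : Finset ℕ, s.card = k ∧
      (μ (⋂ i ∈ (s : Set ℕ), A i)).toReal ≥ ε ^ (3 ^ (k - 1)) :=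
  k_fold_intersection_lemma_general μ ε h0 h1 A hA hε k
end

section
/- If X is a finite set, A₁,…,Aₙ ⊆ X, and k is an integer with every intersection of k distinct A_i's empty (k-inconsistency), and each |A_i| ≥ |X|/M for a positive integer M, then n is bounded: n < some explicit function of M and k (in particular no infinite such family exists and n cannot exceed the bound forced by μ(⋂_{j=1}^k A_{i_j}) ≥ |X|/M^(3^(k−1)) > 0 for some k indices once n is large enough). -/
/-! Every point of `X` lies in at most `k - 1` of the sets, since otherwise some `k` of them
would share it. Double counting incidences between points and sets then gives
`n * |X| ≤ M * ∑ |Aᵢ| ≤ M * (k - 1) * |X|`. -/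

open Finset

theorem card_filter_mem_lt_of_iInter_eq_empty {ι α : Type*} [Fintype ι] [DecidableEq α]
    (A : ι → Finset α) (k : ℕ)
    (hincon : ∀ s : Finset ι, s.card = k → (⋂ i ∈ (s : Set ι), (A i : Set α)) = ∅) (x : α) :
    #{i | x ∈ A i} < k := by
  by_contra! hle
  obtain ⟨s, hs, hsk⟩ := exists_subset_card_eq hle
  have hx : x ∈ ⋂ i ∈ (s : Set ι), (A i : Set α) :=
    Set.mem_iInter₂.mpr fun i hi => by simpa using hs hi
  rw [hincon s hsk] at hx
  exact hx

theorem sum_card_le_mul_card_of_subset {ι α : Type*} [DecidableEq α] (s : Finset ι)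
    (X : Finset α) (A : ι → Finset α) (hsub : ∀ i ∈ s, A i ⊆ X) (d : ℕ)
    (hdeg : ∀ x ∈ X, #{i ∈ s | x ∈ A i} ≤ d) :
    ∑ i ∈ s, #(A i) ≤ d * #X := by
  let r : ι → α → Prop := fun i x => x ∈ A i
  calc ∑ i ∈ s, #(A i) = ∑ i ∈ s, #(X.bipartiteAbove r i) := by
        refine sum_congr rfl fun i hi => ?_
        rw [bipartiteAbove, filter_mem_eq_inter, inter_eq_right.mpr (hsub i hi)]
    _ = ∑ x ∈ X, #(s.bipartiteBelow r x) := sum_card_bipartiteAbove_eq_sum_card_bipartiteBelow r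
    _ ≤ ∑ _x ∈ X, d := sum_le_sum hdeg
    _ = d * #X := by rw [sum_const, smul_eq_mul, mul_comm]

theorem k_inconsistent_family_bound_general {α : Type*} [DecidableEq α] (X : Finset α)
    (hX : X.Nonempty) (M : ℕ) (k : ℕ)
    (n : ℕ) (A : Fin n → Finset α) (hsub : ∀ i, A i ⊆ X)
    (hsize : ∀ i, M * (A i).card ≥ X.card)
    (hincon : ∀ s : Finset (Fin n), s.card = k →
      (⋂ i ∈ (s : Set (Fin n)), (A i : Set α)) = ∅) :
    n ≤ M * (k - 1) := by
  have hdeg : ∀ x ∈ X, #{i | x ∈ A i} ≤ k - 1 := fun x _ =>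
    Nat.le_sub_one_of_lt (card_filter_mem_lt_of_iInter_eq_empty A k hincon x)
  have hincidences : ∑ i, #(A i) ≤ (k - 1) * #X :=
    sum_card_le_mul_card_of_subset univ X A (fun i _ => hsub i) (k - 1) hdeg
  refine Nat.le_of_mul_le_mul_right ?_ (card_pos.mpr hX)
  calc n * #X = ∑ _i : Fin n, #X := by simp
    _ ≤ ∑ i, M * #(A i) := sum_le_sum fun i _ => hsize i
    _ = M * ∑ i, #(A i) := (mul_sum ..).symm
    _ ≤ M * (k - 1) * #X := by rw [mul_assoc]; exact Nat.mul_le_mul_left M hincidences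

theorem k_inconsistent_family_bound {α : Type*} [DecidableEq α] (X : Finset α)
    (hX : X.Nonempty) (M : ℕ) (hM : 0 < M) (k : ℕ) (hk : 1 ≤ k)
    (n : ℕ) (A : Fin n → Finset α) (hsub : ∀ i, A i ⊆ X)
    (hsize : ∀ i, M * (A i).card ≥ X.card)
    (hincon : ∀ s : Finset (Fin n), s.card = k →
      (⋂ i ∈ (s : Set (Fin n)), (A i : Set α)) = ∅) :
    n ≤ M * (k - 1) :=
  k_inconsistent_family_bound_general X hX M k n A hsub hsize hincon
end
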